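/- arXiv:1704.01428 — 5 statements merged into one kernel-verified Lean document; each statement's English description precedes it below -/
import Mathlib

section
/- Let n, m be coprime integers with 1 < n < m. Then every odd-indexed convergent denominator p_{2i-1} (i = 1, ..., t) of the even-length continued fraction expansion m/n = [h₀, ..., h_{2t}] equals 1 if and only if m = λn − 1 for some integer λ > 1. -/
/-- Denominators of continued fraction convergents: `cfDen h (i+1)` is `p i`,
with `p (-1) = 0`, `p 0 = 1`, `p i = h i * p (i-1) + p (i-2)`. -/
def cfDen (h : ℕ → ℕ) : ℕ → ℕ
  | 0 => 0
  | 1 => 1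
  | j + 2 => h (j + 1) * cfDen h (j + 1) + cfDen h j

/-- Numerators of continued fraction convergents: `cfNum h (i+1)` is `q i`,
with `q (-1) = 1`, `q 0 = h 0`, `q i = h i * q (i-1) + q (i-2)`. -/
def cfNum (h : ℕ → ℕ) : ℕ → ℕ
  | 0 => 1
  | 1 => h 0
  | j + 2 => h (j + 1) * cfNum h (j + 1) + cfNum h j

/-- `EuclidCF m n s h N` says `m / n = [h 0, h 1, ..., h s]` is a continued fraction
expansion coming from the Euclidean algorithm, with remainder sequence
`N 0 = m`, `N 1 = n`, `N j = h j * N (j+1) + N (j+2)`, terminating at `N (s+1) = 1`. -/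
structure EuclidCF (m n s : ℕ) (h N : ℕ → ℕ) : Prop where
  N0 : N 0 = m
  N1 : N 1 = n
  step : ∀ j, j ≤ s → N j = h j * N (j + 1) + N (j + 2)
  last : N (s + 1) = 1
  after : N (s + 2) = 0
  hpos : ∀ j, 1 ≤ j → j ≤ s → 1 ≤ h j

/-- For coprime `1 < n < m` with even-length continued fraction expansion
`m / n = [h 0, ..., h (2*t)]`, every odd-indexed convergent denominator
`p (2*i-1)` equals `1` iff `m = l * n - 1` for some integer `l > 1`. -/
theorem stmt2 (m n t : ℕ) (h N : ℕ → ℕ)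
    (hn : 1 < n) (hnm : n < m) (hcop : Nat.Coprime n m) (ht : 1 ≤ t)
    (hcf : EuclidCF m n (2 * t) h N) :
    (∀ i, 1 ≤ i → i ≤ t → cfDen h (2 * i) = 1) ↔ ∃ l : ℕ, 1 < l ∧ m + 1 = l * n := by
  obtain ⟨hN0, hN1, hstep, hlast, hafter, hpos⟩ := hcf
  have hNpos : ∀ d j, j + d = 2 * t + 1 → 1 ≤ N j := by
    intro d
    induction d with
    | zero =>
      intro j hj
      have : j = 2 * t + 1 := by omega
      rw [this, hlast]
    | succ d ih =>
      intro j hj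
      have hj' : 1 ≤ N (j + 1) := ih (j + 1) (by omega)
      rcases Nat.eq_zero_or_pos j with h0 | h1
      · rw [h0, hN0]; omega
      · have hhj : 1 ≤ h j := hpos j h1 (by omega)
        have := Nat.mul_le_mul hhj hj'
        have hs := hstep j (by omega)
        omega
  have c2 : cfDen h 2 = h 1 * 1 + 0 := rfl
  have c3 : cfDen h 3 = h 2 * cfDen h 2 + 1 := rfl
  have c4 : cfDen h 4 = h 3 * cfDen h 3 + cfDen h 2 := rfl
  have e0 := hstep 0 (by omega)
  have e1 := hstep 1 (by omega)
  norm_num at e0 e1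
  constructor
  · intro hall
    have h1e : h 1 = 1 := by
      have := hall 1 le_rfl ht
      rw [show (2 * 1 : ℕ) = 2 from rfl, c2] at this
      omega
    have ht1 : t = 1 := by
      by_contra hne
      have ht2 : 2 ≤ t := by omega
      have h4 := hall 2 (by omega) ht2
      rw [show (2 * 2 : ℕ) = 4 from rfl, c4, c3, c2, h1e] at h4
      have h3p : 1 ≤ h 3 := hpos 3 (by omega) (by omega)
      have := Nat.mul_le_mul h3p (show 1 ≤ h 2 * (1 * 1 + 0) + 1 by omega)
      omega
    subst ht1
    have e2 := hstep 2 (by omega)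
    norm_num at e2 hlast hafter
    rw [hlast, hafter] at e2
    rw [hN1, h1e, hlast] at e1
    rw [hN0, hN1] at e0
    refine ⟨h 0 + 1, ?_, ?_⟩
    · rcases Nat.eq_zero_or_pos (h 0) with hz | hp
      · rw [hz] at e0; omega
      · omega
    · have : (h 0 + 1) * n = h 0 * n + n := by ring
      omega
  · rintro ⟨l, hl, hml⟩ i hi1 hit
    rw [hN0, hN1] at e0
    rw [hN1] at e1
    have hN2 : 1 ≤ N 2 := hNpos (2 * t - 1) 2 (by omega)
    have hN3 : 1 ≤ N 3 := hNpos (2 * t - 2) 3 (by omega)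
    have h1p : 1 ≤ h 1 := hpos 1 le_rfl (by omega)
    have hm1 : N 2 ≤ h 1 * N 2 := Nat.le_mul_of_pos_left _ h1p
    have hN2n : N 2 + 1 ≤ n := by omega
    have key : N 2 + 1 = n := by
      have hle : l ≤ h 0 + 1 := by
        by_contra hgt
        have h1 : (h 0 + 2) * n ≤ l * n := Nat.mul_le_mul_right n (by omega)
        have h2 : (h 0 + 2) * n = h 0 * n + n + n := by ring
        omega
      have hge : h 0 + 1 ≤ l := by
        by_contra hlt
        have : l * n ≤ h 0 * n := Nat.mul_le_mul_right n (by omega)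
        omega
      have hle2 : l = h 0 + 1 := le_antisymm hle hge
      subst hle2
      have : (h 0 + 1) * n = h 0 * n + n := by ring
      omega
    have h1e : h 1 = 1 := by
      by_contra hne
      have : 2 * N 2 ≤ h 1 * N 2 := Nat.mul_le_mul_right _ (by omega)
      omega
    have hN3e : N 3 = 1 := by rw [h1e] at e1; omega
    have ht1 : t = 1 := by
      by_contra hne
      have ht2 : 2 ≤ t := by omega
      have e3 := hstep 3 (by omega)
      norm_num at e3
      have hN4 : 1 ≤ N 4 := hNpos (2 * t - 3) 4 (by omega)
      have hN5 : 1 ≤ N 5 := hNpos (2 * t - 4) 5 (by omega)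
      have h3p : 1 ≤ h 3 := hpos 3 (by omega) (by omega)
      have := Nat.mul_le_mul h3p hN4
      omega
    have hi : i = 1 := by omega
    subst hi
    rw [show (2 * 1 : ℕ) = 2 from rfl, c2, h1e]
end

section
/- For 1 ≤ i ≤ r, the i-th polar quotient (1/n)·Σ_{k=1}^{i-1}(e_{k-1} − e_k)m_k + m_i is strictly increasing in i; i.e., the sequence Q_i = (1/n)Σ_{k=1}^{i-1}(e_{k-1}−e_k)m_k + m_i satisfies Q_1 < Q_2 < ... < Q_r. -/
/-!
Consecutive polar quotients differ by `(e_{i-1} - e_i) m_i / n + (m_{i+1} - m_i)`: the first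
term is nonnegative because the `e_k` form a divisibility chain of positive integers, and the
second is positive because the characteristic exponents increase.
-/

section GcdChain

variable {r : ℕ} {m e : ℕ → ℕ}

lemma pos_of_gcd_chain (h0 : 0 < e 0)
    (hgcd : ∀ k, 1 ≤ k → k ≤ r → e k = Nat.gcd (e (k - 1)) (m k)) :
    ∀ k ≤ r, 0 < e k := by
  intro k
  induction k with
  | zero => exact fun _ => h0
  | succ j ih =>
    intro hjr
    rw [hgcd (j + 1) j.succ_pos hjr, Nat.add_sub_cancel]
    exact Nat.gcd_pos_of_pos_left _ (ih (by omega))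

lemma le_pred_of_gcd_chain (h0 : 0 < e 0)
    (hgcd : ∀ k, 1 ≤ k → k ≤ r → e k = Nat.gcd (e (k - 1)) (m k))
    {k : ℕ} (hk : 1 ≤ k) (hkr : k ≤ r) : e k ≤ e (k - 1) := by
  rw [hgcd k hk hkr]
  exact Nat.gcd_le_left _ (pos_of_gcd_chain h0 hgcd (k - 1) (by omega))

end GcdChain

lemma Finset.sum_Icc_one_eq_sum_Icc_pred_add {M : Type*} [AddCommMonoid M] (f : ℕ → M)
    {i : ℕ} (hi : 1 ≤ i) : ∑ k ∈ Icc 1 i, f k = ∑ k ∈ Icc 1 (i - 1), f k + f i := by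
  obtain ⟨j, rfl⟩ : ∃ j, i = j + 1 := ⟨i - 1, by omega⟩
  exact sum_Icc_succ_top hi f

theorem stmt5_general (r n : ℕ) (m e : ℕ → ℕ) (hn : 0 < n)
    (hmono : ∀ i, 1 ≤ i → i < r → m i < m (i + 1))
    (he0 : e 0 = n)
    (hgcd : ∀ k, 1 ≤ k → k ≤ r → e k = Nat.gcd (e (k - 1)) (m k)) :
    ∀ i, 1 ≤ i → i < r →
      (∑ k ∈ Finset.Icc 1 (i - 1), ((e (k - 1) : ℚ) - (e k : ℚ)) * (m k : ℚ)) / (n : ℚ)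
          + (m i : ℚ)
        < (∑ k ∈ Finset.Icc 1 i, ((e (k - 1) : ℚ) - (e k : ℚ)) * (m k : ℚ)) / (n : ℚ)
          + (m (i + 1) : ℚ) := by
  intro i hi hir
  have hdrop : (e i : ℚ) ≤ e (i - 1) := by
    exact_mod_cast le_pred_of_gcd_chain (he0 ▸ hn) hgcd hi hir.le
  have hstep : (m i : ℚ) < m (i + 1) := by exact_mod_cast hmono i hi hir
  have hnew : 0 ≤ ((e (i - 1) : ℚ) - e i) * m i / n := by
    have := sub_nonneg.mpr hdrop
    positivity
  rw [Finset.sum_Icc_one_eq_sum_Icc_pred_add _ hi, add_div]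
  linarith

/-- The polar quotients `Q i = (1/n) * ∑_{k=1}^{i-1} (e (k-1) - e k) * m k + m i`
are strictly increasing in `i` for `1 ≤ i ≤ r`. -/
theorem stmt5 (r n : ℕ) (m e : ℕ → ℕ) (hr : 1 ≤ r) (hn : 0 < n)
    (hm1 : 0 < m 1)
    (hmono : ∀ i, 1 ≤ i → i < r → m i < m (i + 1))
    (he0 : e 0 = n)
    (hgcd : ∀ k, 1 ≤ k → k ≤ r → e k = Nat.gcd (e (k - 1)) (m k))
    (her : e r = 1) :
    ∀ i, 1 ≤ i → i < r →
      (∑ k ∈ Finset.Icc 1 (i - 1), ((e (k - 1) : ℚ) - (e k : ℚ)) * (m k : ℚ)) / (n : ℚ)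
          + (m i : ℚ)
        < (∑ k ∈ Finset.Icc 1 i, ((e (k - 1) : ℚ) - (e k : ℚ)) * (m k : ℚ)) / (n : ℚ)
          + (m (i + 1) : ℚ) :=
  stmt5_general r n m e hn hmono he0 hgcd
end

section
/- Let e > 1 and a be positive integers with a coprime to e and a not a multiple of e. All odd-indexed convergent denominators of the even-length continued fraction expansion of a/e equal 1 if and only if a ≡ −1 (mod e). -/
/-- For coprime positive `a`, `e` with `e > 1` and `e ∤ a`, all odd-indexed
convergent denominators of the even-length continued fraction expansion of
`a / e` equal `1` iff `a ≡ -1 (mod e)`. -/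
theorem stmt12 (a e t : ℕ) (h N : ℕ → ℕ) (ha : 0 < a) (he : 1 < e)
    (hcop : Nat.Coprime a e) (hndvd : ¬ e ∣ a) (ht : 1 ≤ t)
    (hcf : EuclidCF a e (2 * t) h N) :
    (∀ i, 1 ≤ i → i ≤ t → cfDen h (2 * i) = 1) ↔ (a + 1) % e = 0 := by
  obtain ⟨N0, N1, step, last, after, hpos⟩ := hcf
  -- positivity of the remainder sequence
  have Npos : ∀ d j, j + d = 2 * t + 1 → 1 ≤ N j := by
    intro d
    induction d with
    | zero =>
      intro j hj
      have hje : j = 2 * t + 1 := by omega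
      rw [hje, last]
    | succ d ih =>
      intro j hj
      have hjs : j ≤ 2 * t := by omega
      have hstep := step j hjs
      have h2 := ih (j + 1) (by omega)
      rcases Nat.eq_zero_or_pos j with hj0 | hj1
      · subst hj0; rw [N0]; exact ha
      · have hh := hpos j hj1 hjs
        have hmul := Nat.mul_pos hh h2
        omega
  have Npos' : ∀ j, j ≤ 2 * t + 1 → 1 ≤ N j :=
    fun j hj => Npos (2 * t + 1 - j) j (by omega)
  have cf2 : cfDen h 2 = h 1 := by simp [cfDen]
  constructor
  · intro H
    have h1eq : h 1 = 1 := by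
      have := H 1 le_rfl ht
      rw [cf2] at this; exact this
    have ht1 : t = 1 := by
      by_contra hne
      have ht2 : 2 ≤ t := by omega
      have h4 := H 2 (by omega) ht2
      have c3 : cfDen h 3 = h 2 + 1 := by simp [cfDen, h1eq]
      have c4 : cfDen h 4 = h 3 * (h 2 + 1) + 1 := by
        show h 3 * cfDen h 3 + cfDen h 2 = _
        rw [c3, cf2, h1eq]
      have hh2 := hpos 2 (by omega) (by omega)
      have hh3 := hpos 3 (by omega) (by omega)
      have hmul := Nat.mul_pos hh3 (show 0 < h 2 + 1 by omega)
      rw [show (2 * 2 : ℕ) = 4 by rfl, c4] at h4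
      omega
    subst ht1
    have s0 := step 0 (by omega)
    have s1 := step 1 (by omega)
    norm_num at s0 s1
    rw [N0, N1] at s0
    rw [N1] at s1
    have l3 : N 3 = 1 := by simpa using last
    rw [h1eq, one_mul, l3] at s1
    -- a = h 0 * e + N 2, e = N 2 + 1
    have key : a + 1 = e * h 0 + e := by
      rw [mul_comm e (h 0)]; omega
    have hdvd : e ∣ a + 1 := key ▸ ⟨h 0 + 1, by ring⟩
    obtain ⟨k, hk⟩ := hdvd
    rw [hk]
    exact Nat.mul_mod_right e k
  · intro hmod
    have hdvd : e ∣ a + 1 := Nat.dvd_of_mod_eq_zero hmod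
    have s0 := step 0 (by omega)
    have s1 := step 1 (by omega)
    norm_num at s0 s1
    rw [N0, N1] at s0
    rw [N1] at s1
    have hN2 : 1 ≤ N 2 := Npos' 2 (by omega)
    have hN3 : 1 ≤ N 3 := Npos' 3 (by omega)
    have hh1 := hpos 1 (by omega) (by omega)
    have hm1 : N 2 ≤ h 1 * N 2 := Nat.le_mul_of_pos_left _ hh1
    have hle : N 2 + 1 ≤ e := by omega
    have hdvd2 : e ∣ N 2 + 1 := by
      have heq : a + 1 = h 0 * e + (N 2 + 1) := by omega
      have hd0 : e ∣ h 0 * e := dvd_mul_left e (h 0)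
      rw [heq] at hdvd
      exact (Nat.dvd_add_right hd0).mp hdvd
    have hN2e : N 2 + 1 = e := le_antisymm hle (Nat.le_of_dvd (by omega) hdvd2)
    have h1le : h 1 ≤ 1 := by
      have : h 1 * N 2 ≤ 1 * N 2 := by rw [one_mul]; omega
      exact Nat.le_of_mul_le_mul_right this (by omega)
    have h1eq : h 1 = 1 := le_antisymm h1le hh1
    rw [h1eq, one_mul] at s1
    have hN3e : N 3 = 1 := by omega
    have ht1 : t = 1 := by
      by_contra hne
      have ht2 : 2 ≤ t := by omega
      have s3 := step 3 (by omega)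
      norm_num at s3
      have hN4 : 1 ≤ N 4 := Npos' 4 (by omega)
      have hN5 : 1 ≤ N 5 := Npos' 5 (by omega)
      have hh3 := hpos 3 (by omega) (by omega)
      have hmul := Nat.mul_pos hh3 hN4
      omega
    intro i hi1 hit
    have : i = 1 := by omega
    subst this
    rw [show (2 * 1 : ℕ) = 2 by rfl, cf2, h1eq]
end

section
/- For each Merle package index j, with d_j = e_{j-1}/e_j and the even-length continued fraction expansion of ((m_j − m_{j-1})/e_j)/d_j = [h^j_0, ..., h^j_{2t(j)}], the identity Σ_{k=1}^{t(j)} h^j_{2k} · p^j_{2k-1} = d_j − 1 holds, where p^j_{2k-1} are the convergent denominators. -/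
/-!
Since `p_{2k} = h_{2k} p_{2k-1} + p_{2k-2}` and `p_0 = 1`, the sum telescopes to `p_{2t} - 1`.
The remainders of the Euclidean algorithm satisfy `d = p_j N_{j+1} + p_{j-1} N_{j+2}` for every
`j`, and at the last step `N = 1, 0`, so the denominator `p_{2t}` of the last convergent is `d`.
-/

theorem sum_mul_cfDen_even_add_one (h : ℕ → ℕ) (t : ℕ) :
    ∑ k ∈ Finset.Icc 1 t, h (2 * k) * cfDen h (2 * k) + 1 = cfDen h (2 * t + 1) := by
  induction t with
  | zero => rfl
  | succ t ih =>
    rw [Finset.sum_Icc_succ_top (by omega), add_right_comm, ih,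
      show 2 * (t + 1) + 1 = 2 * t + 1 + 2 by ring, cfDen]
    ring_nf

namespace EuclidCF

variable {m n s : ℕ} {h N : ℕ → ℕ}

theorem eq_cfDen_mul_add (hcf : EuclidCF m n s h N) {j : ℕ} (hj : j ≤ s) :
    n = cfDen h (j + 1) * N (j + 1) + cfDen h j * N (j + 2) := by
  induction j with
  | zero => simp [cfDen, hcf.N1]
  | succ j ih =>
    rw [ih (by omega), hcf.step (j + 1) hj, cfDen]
    ring

theorem cfDen_succ_eq (hcf : EuclidCF m n s h N) : cfDen h (s + 1) = n := by
  simpa [hcf.last, hcf.after] using (hcf.eq_cfDen_mul_add le_rfl).symm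

end EuclidCF

theorem stmt17_general (d a t : ℕ) (h N : ℕ → ℕ)
    (hcf : EuclidCF a d (2 * t) h N) :
    ∑ k ∈ Finset.Icc 1 t, h (2 * k) * cfDen h (2 * k) = d - 1 := by
  have htelescope := sum_mul_cfDen_even_add_one h t
  rw [hcf.cfDen_succ_eq] at htelescope
  omega

/-- For a Merle package with `d = e (j-1) / e j` and even-length expansion
`a / d = [h 0, ..., h (2*t)]` of `a = (m j - m (j-1)) / e j`, the identity
`∑ k in [1, t], h (2*k) * p (2*k-1) = d - 1` holds for the convergent
denominators. -/
theorem stmt17 (mj mj1 ej1 ej d a t : ℕ) (h N : ℕ → ℕ)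
    (hej : ej = Nat.gcd ej1 mj) (hd : d = ej1 / ej) (ha : a = (mj - mj1) / ej)
    (hd2 : 2 ≤ d) (hcop : Nat.Coprime a d) (ht : 1 ≤ t)
    (hcf : EuclidCF a d (2 * t) h N) :
    ∑ k ∈ Finset.Icc 1 t, h (2 * k) * cfDen h (2 * k) = d - 1 :=
  stmt17_general d a t h N hcf
end

section
/- Monotonicity of polar quotients across packages: for 0 ≤ l < k ≤ r−1, (1/(e_l))·(Σ_{w=1}^{l} m_w(e_{w-1} − e_w)/n + m_{l+1} e_l/n) < (1/(e_k))·(Σ_{w=1}^{k} m_w(e_{w-1} − e_w)/n + m_{k+1} e_k/n); equivalently Σ_{w=1}^{l} m_w(e_{w-1} − e_w) + m_{l+1} e_l < Σ_{w=1}^{k} m_w(e_{w-1} − e_w) + m_{k+1} e_k. -/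
/-!
Writing `Q j = ∑_{w=1}^{j} m_w (e_{w-1} - e_w) + m_{j+1} e_j` for `n` times the `(j+1)`-th polar
quotient, the sum telescopes to `Q (j+1) - Q j = (m_{j+2} - m_{j+1}) e_{j+1}`. This is positive
because the `m_j` increase strictly and each `e_{j+1} = gcd (e_j, m_{j+1})` is the gcd with a
positive number.
-/

open Finset

section PolarQuotient

variable {R : Type*} [CommRing R]

def polarQuotientNumerator (m e : ℕ → R) (j : ℕ) : R :=
  ∑ w ∈ Icc 1 j, m w * (e (w - 1) - e w) + m (j + 1) * e j

theorem polarQuotientNumerator_succ (m e : ℕ → R) (j : ℕ) :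
    polarQuotientNumerator m e (j + 1)
      = polarQuotientNumerator m e j + (m (j + 2) - m (j + 1)) * e (j + 1) := by
  simp only [polarQuotientNumerator, sum_Icc_succ_top (Nat.le_add_left 1 j), Nat.add_sub_cancel]
  ring

theorem strictMonoOn_polarQuotientNumerator [LinearOrder R] [IsStrictOrderedRing R]
    {m e : ℕ → R} {N : ℕ} (hm : ∀ j, j < N → m (j + 1) < m (j + 2))
    (he : ∀ j, j < N → 0 < e (j + 1)) :
    StrictMonoOn (polarQuotientNumerator m e) (Set.Iic N) :=
  strictMonoOn_Iic_of_lt_succ fun j hj => by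
    rw [Order.succ_eq_add_one, polarQuotientNumerator_succ]
    exact lt_add_of_pos_right _ (mul_pos (sub_pos.2 (hm j hj)) (he j hj))

end PolarQuotient

theorem stmt18_general (r l k : ℕ) (m e : ℕ → ℕ)
    (hmono : ∀ i, i < r → m i < m (i + 1))
    (hgcd : ∀ j, 1 ≤ j → j ≤ r → e j = Nat.gcd (e (j - 1)) (m j))
    (hlk : l < k) (hk : k ≤ r - 1) :
    (∑ w ∈ Finset.Icc 1 l, (m w : ℤ) * ((e (w - 1) : ℤ) - (e w : ℤ)))
        + (m (l + 1) : ℤ) * (e l : ℤ)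
      < (∑ w ∈ Finset.Icc 1 k, (m w : ℤ) * ((e (w - 1) : ℤ) - (e w : ℤ)))
        + (m (k + 1) : ℤ) * (e k : ℤ) := by
  have he_pos : ∀ j, j < r - 1 → (0 : ℤ) < e (j + 1) := fun j hj => by
    rw [hgcd (j + 1) (Nat.le_add_left 1 j) (by omega), Nat.add_sub_cancel]
    exact_mod_cast Nat.gcd_pos_of_pos_right _ (Nat.zero_lt_of_lt (hmono j (by omega)))
  have hm : ∀ j, j < r - 1 → (m (j + 1) : ℤ) < m (j + 2) := fun j hj => by
    exact_mod_cast hmono (j + 1) (by omega)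
  exact strictMonoOn_polarQuotientNumerator (m := fun w => (m w : ℤ)) (e := fun w => (e w : ℤ))
    hm he_pos (hlk.le.trans hk : l ≤ r - 1) hk hlk

/-- Monotonicity of polar quotients across Merle packages: for `0 ≤ l < k ≤ r - 1`,
`∑_{w=1}^{l} m w * (e (w-1) - e w) + m (l+1) * e l
  < ∑_{w=1}^{k} m w * (e (w-1) - e w) + m (k+1) * e k`. -/
theorem stmt18 (r n l k : ℕ) (m e : ℕ → ℕ)
    (hn : 0 < n) (hm0 : m 0 = 0)
    (hmono : ∀ i, i < r → m i < m (i + 1))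
    (he0 : e 0 = n)
    (hgcd : ∀ j, 1 ≤ j → j ≤ r → e j = Nat.gcd (e (j - 1)) (m j))
    (her : e r = 1) (hlk : l < k) (hk : k ≤ r - 1) :
    (∑ w ∈ Finset.Icc 1 l, (m w : ℤ) * ((e (w - 1) : ℤ) - (e w : ℤ)))
        + (m (l + 1) : ℤ) * (e l : ℤ)
      < (∑ w ∈ Finset.Icc 1 k, (m w : ℤ) * ((e (w - 1) : ℤ) - (e w : ℤ)))
        + (m (k + 1) : ℤ) * (e k : ℤ) :=
  stmt18_general r l k m e hmono hgcd hlk hk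
end
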